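/- Let α ≥ 0, let q be a real polynomial of degree r ≥ 1 with only real zeros, and suppose the simple set B = {b_k}_{k=0}^∞ satisfies γ_n b_n = q·b_n^{(r)} + α·q'·b_n^{(r−1)} for all n with real numbers γ_n. Then {γ_n} is a B-complex zero decreasing sequence: for every real polynomial g = Σ_{k=0}^m d_k b_k, Z_C(Σ_{k=0}^m γ_k d_k b_k) ≤ Z_C(g). -/

import Mathlib

open Polynomial Finset

open scoped Classical in
/-- Number of non-real complex zeros of a real polynomial, counted with multiplicity. -/
noncomputable def ZC (p : Polynomial ℝ) : ℕ :=
  (((p.map (algebraMap ℝ ℂ)).roots).filter (fun z => z.im ≠ 0)).card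

/-- Number of real zeros of a real polynomial, counted with multiplicity. -/
noncomputable def ZR (p : Polynomial ℝ) : ℕ := p.roots.card

/-!
Put `L h := q h' + α q' h`. The eigen-relation turns the `γ`-weighted sum into `L (g^(r-1))`, and
differentiation does not increase `Z_C` by Rolle's theorem. For `L`, Rolle's theorem applied to
`|q|^α h` puts a zero of `L h` strictly between any two consecutive real zeros of `q h`, and at a
common zero the multiplicity drops by at most one; hence `Z_R(L h) ≥ r + Z_R(h) - 1`. Since
`deg (L h) ≤ r + deg h - 1` and `Z_C = deg - Z_R`, this gives `Z_C(L h) ≤ Z_C(h)`.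
-/

open Set

theorem filter_roots_map_complex_im_eq_zero (p : ℝ[X]) :
    (p.map (algebraMap ℝ ℂ)).roots.filter (fun z => z.im = 0) = p.roots.map (algebraMap ℝ ℂ) := by
  classical
  ext w
  rw [Multiset.count_filter]
  split_ifs with hw
  · obtain ⟨x, rfl⟩ : ∃ x : ℝ, algebraMap ℝ ℂ x = w := ⟨w.re, Complex.ext rfl hw.symm⟩
    rw [Multiset.count_map_eq_count' _ _ (algebraMap ℝ ℂ).injective, count_roots, count_roots,
      ← eq_rootMultiplicity_map (algebraMap ℝ ℂ).injective]
  · refine (Multiset.count_eq_zero.2 fun hw' => hw ?_).symm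
    obtain ⟨x, -, rfl⟩ := Multiset.mem_map.1 hw'
    exact Complex.ofReal_im x

theorem ZC_add_ZR (p : ℝ[X]) : ZC p + ZR p = p.natDegree := by
  classical
  rw [ZC, ZR, ← Multiset.card_map (algebraMap ℝ ℂ), ← filter_roots_map_complex_im_eq_zero,
    ← IsAlgClosed.card_roots_map_eq_natDegree_of_injective p (algebraMap ℝ ℂ).injective,
    ← Multiset.card_add, add_comm]
  convert congrArg Multiset.card (Multiset.filter_add_not (fun z : ℂ => z.im = 0) _)

theorem ZC_derivative_le (p : ℝ[X]) : ZC (derivative p) ≤ ZC p := by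
  have := ZC_add_ZR p
  have := ZC_add_ZR (derivative p)
  have := card_roots_le_derivative p
  have := natDegree_derivative p
  have := card_roots' (derivative p)
  simp only [ZR] at *
  omega

theorem ZC_iterate_derivative_le (p : ℝ[X]) (n : ℕ) : ZC (derivative^[n] p) ≤ ZC p := by
  induction n with
  | zero => rfl
  | succ n ih => exact (Function.iterate_succ_apply' derivative n p ▸ ZC_derivative_le _).trans ih

/-- On an interval where `q` has no zero,
`(|q| ^ α * h)' = |q| ^ α / q * weightedDerivative α q h`. -/
noncomputable def weightedDerivative {R : Type*} [CommSemiring R] (α : R) (q h : R[X]) : R[X] :=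
  q * derivative h + C α * derivative q * h

section CommSemiring

variable {R : Type*} [CommSemiring R]

theorem natDegree_mul_derivative_le (p s : R[X]) :
    (p * derivative s).natDegree ≤ p.natDegree + s.natDegree - 1 := by
  rcases eq_or_ne s.natDegree 0 with hs | hs
  · rw [eq_C_of_natDegree_eq_zero hs, derivative_C, mul_zero, natDegree_zero]
    exact Nat.zero_le _
  · have := natDegree_derivative_le s
    have := natDegree_mul_le (p := p) (q := derivative s)
    omega

theorem natDegree_weightedDerivative_le (α : R) (q h : R[X]) :
    (weightedDerivative α q h).natDegree ≤ q.natDegree + h.natDegree - 1 := by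
  have hterm : (C α * derivative q * h).natDegree ≤ q.natDegree + h.natDegree - 1 := by
    rw [mul_assoc, mul_comm (derivative q), add_comm q.natDegree]
    exact natDegree_C_mul_le _ _ |>.trans (natDegree_mul_derivative_le h q)
  exact natDegree_add_le_of_degree_le (natDegree_mul_derivative_le q h) hterm

theorem weightedDerivative_eq_zero_of_mul_eq_zero [NoZeroDivisors R] {α : R} {q h : R[X]}
    (hqh : q * h = 0) : weightedDerivative α q h = 0 := by
  rcases mul_eq_zero.1 hqh with rfl | rfl <;> simp [weightedDerivative]

end CommSemiring

section CommRing

variable {R : Type*} [CommRing R]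

theorem rootMultiplicity_add_le_rootMultiplicity_weightedDerivative {α : R} {q h : R[X]}
    (hf : weightedDerivative α q h ≠ 0) (a : R) :
    rootMultiplicity a q + rootMultiplicity a h ≤
      rootMultiplicity a (weightedDerivative α q h) + 1 := by
  set μ := rootMultiplicity a q
  set k := rootMultiplicity a h
  have hq := pow_rootMultiplicity_dvd q a
  have hh := pow_rootMultiplicity_dvd h a
  have h₁ : (X - C a) ^ (μ + k - 1) ∣ q * derivative h := by
    refine (pow_dvd_pow _ (by omega : μ + k - 1 ≤ μ + (k - 1))).trans ?_
    rw [pow_add]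
    exact mul_dvd_mul hq (pow_sub_one_dvd_derivative_of_pow_dvd hh)
  have h₂ : (X - C a) ^ (μ + k - 1) ∣ C α * derivative q * h := by
    refine (pow_dvd_pow _ (by omega : μ + k - 1 ≤ μ - 1 + k)).trans ?_
    rw [pow_add]
    exact mul_dvd_mul ((pow_sub_one_dvd_derivative_of_pow_dvd hq).mul_left _) hh
  have := (le_rootMultiplicity_iff hf).2 (h₁.add h₂)
  omega

/-- The counting argument of `Polynomial.card_roots_le_derivative`, with `f` in place of `p'`. -/
theorem card_roots_le_card_roots_add_one_of_interleaved [IsDomain R] [DecidableEq R]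
    {p f : R[X]}
    (hmult : ∀ x, rootMultiplicity x p - 1 ≤ rootMultiplicity x f)
    (hinter : p.roots.toFinset.card ≤ (f.roots.toFinset \ p.roots.toFinset).card + 1) :
    p.roots.card ≤ f.roots.card + 1 := by
  calc p.roots.card = ∑ x ∈ p.roots.toFinset, p.roots.count x :=
        (Multiset.toFinset_sum_count_eq _).symm
    _ = ∑ x ∈ p.roots.toFinset, (p.roots.count x - 1 + 1) :=
        (Finset.sum_congr rfl fun _ hx => tsub_add_cancel_of_le <|
          Nat.succ_le_iff.2 <| Multiset.count_pos.2 <| Multiset.mem_toFinset.1 hx).symm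
    _ = (∑ x ∈ p.roots.toFinset, (p.rootMultiplicity x - 1)) + p.roots.toFinset.card := by
        simp only [Finset.sum_add_distrib, Finset.card_eq_sum_ones, count_roots]
    _ ≤ (∑ x ∈ p.roots.toFinset, f.rootMultiplicity x) +
          ((f.roots.toFinset \ p.roots.toFinset).card + 1) :=
        add_le_add (Finset.sum_le_sum fun x _ => hmult x) hinter
    _ ≤ (∑ x ∈ p.roots.toFinset, f.roots.count x) +
          ((∑ x ∈ f.roots.toFinset \ p.roots.toFinset, f.roots.count x) + 1) := by
        simp only [← count_roots, Finset.card_eq_sum_ones]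
        gcongr with x hx
        rw [Nat.succ_le_iff, Multiset.count_pos, ← Multiset.mem_toFinset]
        exact (Finset.mem_sdiff.1 hx).1
    _ = f.roots.card + 1 := by
        rw [← add_assoc, ← Finset.sum_union Finset.disjoint_sdiff, Finset.union_sdiff_self_eq_union,
          ← Multiset.toFinset_sum_count_eq, ← Finset.sum_subset Finset.subset_union_right]
        intro x _ hx₂
        simpa only [Multiset.mem_toFinset, Multiset.count_eq_zero] using hx₂

end CommRing

theorem hasDerivAt_rpow_sq_mul_eval (α : ℝ) {q h : ℝ[X]} {t : ℝ} (hq : q.eval t ≠ 0) :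
    HasDerivAt (fun s => (q.eval s ^ 2) ^ (α / 2) * h.eval s)
      ((q.eval t ^ 2) ^ (α / 2) / q.eval t * (weightedDerivative α q h).eval t) t := by
  have hsq : HasDerivAt (fun s => q.eval s ^ 2) (2 * q.eval t * (derivative q).eval t) t :=
    ((q.hasDerivAt t).fun_pow 2).congr_deriv (by push_cast; ring)
  have hpos : 0 < q.eval t ^ 2 := by positivity
  refine ((hsq.rpow_const (p := α / 2) (Or.inl hpos.ne')).fun_mul (h.hasDerivAt t)).congr_deriv ?_
  rw [Real.rpow_sub_one hpos.ne', weightedDerivative]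
  simp only [eval_add, eval_mul, eval_C]
  field_simp
  ring

theorem exists_eval_weightedDerivative_eq_zero {α : ℝ} (hα : 0 < α) {q h : ℝ[X]} {x y : ℝ}
    (hxy : x < y) (hx : (q * h).eval x = 0) (hy : (q * h).eval y = 0)
    (hq : ∀ z ∈ Ioo x y, q.eval z ≠ 0) :
    ∃ c ∈ Ioo x y, (weightedDerivative α q h).eval c = 0 := by
  set w : ℝ → ℝ := fun s => (q.eval s ^ 2) ^ (α / 2) * h.eval s
  have hw : ∀ s, (q * h).eval s = 0 → w s = 0 := by
    intro s hs
    rcases mul_eq_zero.1 ((eval_mul (p := q)).symm.trans hs) with hs | hs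
    · simp [w, hs, Real.zero_rpow (by positivity : α / 2 ≠ 0)]
    · simp [w, hs]
  have hwc : Continuous w :=
    (((q.continuous).pow 2).rpow_const fun _ => Or.inr (by positivity)).mul h.continuous
  obtain ⟨c, hc, hc0⟩ := exists_hasDerivAt_eq_zero hxy hwc.continuousOn
    ((hw x hx).trans (hw y hy).symm) fun t ht => hasDerivAt_rpow_sq_mul_eval α (hq t ht)
  refine ⟨c, hc, (mul_eq_zero.1 hc0).resolve_left ?_⟩
  have := hq c hc
  positivity

theorem card_roots_toFinset_mul_le_weightedDerivative_sdiff_succ {α : ℝ} (hα : 0 < α)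
    {q h : ℝ[X]}
    (hf : weightedDerivative α q h ≠ 0) :
    (q * h).roots.toFinset.card ≤
      ((weightedDerivative α q h).roots.toFinset \ (q * h).roots.toFinset).card + 1 := by
  have hqh : q * h ≠ 0 := mt weightedDerivative_eq_zero_of_mul_eq_zero hf
  refine Finset.card_le_sdiff_of_interleaved fun x hx y hy hxy hgap => ?_
  rw [Multiset.mem_toFinset, mem_roots hqh] at hx hy
  obtain ⟨c, hc, hc0⟩ := exists_eval_weightedDerivative_eq_zero hα hxy hx hy fun z hz hqz =>
    hgap z (by rw [Multiset.mem_toFinset, mem_roots hqh, IsRoot, eval_mul, hqz, zero_mul]) hz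
  exact ⟨c, by rwa [Multiset.mem_toFinset, mem_roots hf], hc⟩

theorem card_roots_add_card_roots_le_weightedDerivative {α : ℝ} (hα : 0 ≤ α) {q h : ℝ[X]}
    (hf : weightedDerivative α q h ≠ 0) :
    q.roots.card + h.roots.card ≤ (weightedDerivative α q h).roots.card + 1 := by
  have hqh : q * h ≠ 0 := mt weightedDerivative_eq_zero_of_mul_eq_zero hf
  rcases hα.eq_or_lt with rfl | hα
  -- for `α = 0` the weight `|q| ^ α` does not vanish at the zeros of `q`: apply Rolle to `h` alone
  · have hf' : q * derivative h ≠ 0 := by simpa [weightedDerivative] using hf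
    simp only [weightedDerivative, map_zero, zero_mul, add_zero]
    rw [roots_mul hf', Multiset.card_add, add_assoc]
    exact Nat.add_le_add_left (card_roots_le_derivative h) _
  · rw [← Multiset.card_add, ← roots_mul hqh]
    refine card_roots_le_card_roots_add_one_of_interleaved (fun x => ?_)
      (card_roots_toFinset_mul_le_weightedDerivative_sdiff_succ hα hf)
    have := rootMultiplicity_add_le_rootMultiplicity_weightedDerivative hf x
    rw [rootMultiplicity_mul hqh]
    omega

theorem ZC_weightedDerivative_le {α : ℝ} (hα : 0 ≤ α) {q : ℝ[X]}
    (hq : q.roots.card = q.natDegree) (h : ℝ[X]) : ZC (weightedDerivative α q h) ≤ ZC h := by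
  by_cases hf : weightedDerivative α q h = 0
  · simp [hf, ZC]
  have := card_roots_add_card_roots_le_weightedDerivative hα hf
  have := natDegree_weightedDerivative_le α q h
  have := ZC_add_ZR (weightedDerivative α q h)
  have := ZC_add_ZR h
  have := card_roots' h
  simp only [ZR] at *
  omega

theorem sum_C_mul_eq_map_sum {R : Type*} [CommRing R] (T : R[X] →ₗ[R] R[X])
    {b : ℕ → R[X]} {γ : ℕ → R} (hT : ∀ n, C (γ n) * b n = T (b n)) (d : ℕ → R) (s : Finset ℕ) :
    ∑ k ∈ s, C (γ k * d k) * b k = T (∑ k ∈ s, C (d k) * b k) := by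
  rw [map_sum]
  refine Finset.sum_congr rfl fun k _ => ?_
  rw [C_mul' (d k), map_smul, ← hT, smul_eq_C_mul, ← mul_assoc, ← C_mul, mul_comm (d k)]

theorem stmt18_general (α : ℝ) (hα : 0 ≤ α) (r : ℕ) (hr : 1 ≤ r)
    (q : Polynomial ℝ) (hq : q.degree = r) (hqroots : q.roots.card = r)
    (b : ℕ → Polynomial ℝ)
    (γ : ℕ → ℝ)
    (hde : ∀ n, C (γ n) * b n
        = q * derivative^[r] (b n) + C α * derivative q * derivative^[r - 1] (b n))
    (m : ℕ) (d : ℕ → ℝ) :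
    ZC (∑ k ∈ Finset.range (m + 1), C (γ k * d k) * b k)
      ≤ ZC (∑ k ∈ Finset.range (m + 1), C (d k) * b k) := by
  set T : ℝ[X] →ₗ[ℝ] ℝ[X] := LinearMap.mulLeft ℝ q ∘ₗ derivative ^ r +
    LinearMap.mulLeft ℝ (C α * derivative q) ∘ₗ derivative ^ (r - 1)
  have hT : ∀ p, T p = q * derivative^[r] p + C α * derivative q * derivative^[r - 1] p :=
    fun p => by simp [T, Module.End.pow_apply, mul_assoc]
  have hTw : ∀ p, T p = weightedDerivative α q (derivative^[r - 1] p) := fun p => by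
    rw [hT, weightedDerivative, ← Function.iterate_succ_apply' derivative, Nat.succ_eq_add_one,
      Nat.sub_add_cancel hr]
  have hqroots' : q.roots.card = q.natDegree := by rw [hqroots, natDegree_eq_of_degree_eq_some hq]
  rw [sum_C_mul_eq_map_sum T (fun n => (hde n).trans (hT _).symm), hTw]
  exact (ZC_weightedDerivative_le hα hqroots' _).trans (ZC_iterate_derivative_le _ _)

theorem stmt18 (α : ℝ) (hα : 0 ≤ α) (r : ℕ) (hr : 1 ≤ r)
    (q : Polynomial ℝ) (hq : q.degree = r) (hqroots : q.roots.card = r)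
    (b : ℕ → Polynomial ℝ) (hdeg : ∀ n, (b n).degree = n)
    (γ : ℕ → ℝ)
    (hde : ∀ n, C (γ n) * b n
        = q * derivative^[r] (b n) + C α * derivative q * derivative^[r - 1] (b n))
    (m : ℕ) (d : ℕ → ℝ) :
    ZC (∑ k ∈ Finset.range (m + 1), C (γ k * d k) * b k)
      ≤ ZC (∑ k ∈ Finset.range (m + 1), C (d k) * b k) :=
  stmt18_general α hα r hr q hq hqroots b γ hde m d
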